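/- There is an absolute constant C with the following property. Let α ∈ (0,π) with α ≠ π/2, set ε_α := min(α, |α − π/2|, π − α), let p ∈ [2,∞) be admissible for α, q := p/(p−1), and for ξ ∈ ℝ set Ξ := 2/q + iξ. Then for all ξ ∈ ℝ and all θ, y ∈ (0,α): |Ξ|·|K(ξ,θ,y)| ≤ C·ε_α^{−1} and |ξ|·|∂_ξ K(ξ,θ,y)| ≤ C·ε_α^{−1}, where ∂_ξ denotes the partial derivative in the real variable ξ. -/

import Mathlib

noncomputable section

/-- `p ∈ [2,∞)` is admissible for the aperture `α`: `p ≥ 4` when `α < π/2`, and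
`p ≥ 2 p_α = 2·2α/(2α−π)` when `α > π/2`. -/
def Admissible (α p : ℝ) : Prop :=
  (α < Real.pi / 2 ∧ 4 ≤ p) ∨ (Real.pi / 2 < α ∧ 2 * (2 * α / (2 * α - Real.pi)) ≤ p)

/-- `Ξ = 2/q + iξ`. -/
def Xi (q ξ : ℝ) : ℂ := ((2 / q : ℝ) : ℂ) + (ξ : ℂ) * Complex.I

/-- The Green kernel, at frequency `ξ`, of `(∂_t + 2/q)² U + ∂_θ² U = h` on
`ℝ × (0,α)` with Dirichlet boundary conditions. -/
def Kker (q α ξ θ y : ℝ) : ℂ :=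
  if θ ≤ y then
    Complex.sin (Xi q ξ * (θ : ℂ)) * Complex.sin (Xi q ξ * ((y : ℂ) - (α : ℂ))) /
      (Xi q ξ * Complex.sin (Xi q ξ * (α : ℂ)))
  else
    Complex.sin (Xi q ξ * ((θ : ℂ) - (α : ℂ))) * Complex.sin (Xi q ξ * (y : ℂ)) /
      (Xi q ξ * Complex.sin (Xi q ξ * (α : ℂ)))

/-!
Write `K = g(Ξ)` with `g(z) = sin(za) sin(zb) / (z sin(zα))`, where `(a, b)` is `(θ, y - α)` or
`(θ - α, y)`, so that `|a| + |b| ≤ α`. Since `|sin(x + iy)|² = sin² x + sinh² y`, the numerator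
and `cos(zα)` are at most `cosh(ξα)`, while `|sin(Ξα)| ≥ m cosh(ξα)` as soon as
`m ≤ |sin((2/q)α)|`. Admissibility keeps `(2/q)α` at distance at least `ε_α` from `πℤ`, so Jordan's
inequality gives `m = 2ε_α/π`. Then `|Ξ||K| ≤ 1/m`, and the three quotients in `∂_ξ K` are each
`O(1/m)`; in the one with `cosh²(ξα)/|sin(Ξα)|²` the extra factor `|ξ|α` is absorbed by
`2m|ξ|α ≤ m² + sinh²(ξα) ≤ |sin(Ξα)|²`.
-/

theorem Real.cosh_mul_mul_cosh_mul_le {a b α : ℝ} (hab : |a| + |b| ≤ α) (t : ℝ) :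
    Real.cosh (t * a) * Real.cosh (t * b) ≤ Real.cosh (t * α) := by
  have hα : 0 ≤ α := (add_nonneg (abs_nonneg a) (abs_nonneg b)).trans hab
  calc Real.cosh (t * a) * Real.cosh (t * b) = Real.cosh |t * a| * Real.cosh |t * b| := by
        rw [Real.cosh_abs, Real.cosh_abs]
    _ ≤ Real.cosh (|t * a| + |t * b|) := by
        rw [Real.cosh_add]
        exact le_add_of_nonneg_right (mul_nonneg (Real.sinh_nonneg_iff.2 (abs_nonneg _))
          (Real.sinh_nonneg_iff.2 (abs_nonneg _)))
    _ ≤ Real.cosh (t * α) := by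
        refine Real.cosh_le_cosh.2 ?_
        rw [abs_of_nonneg (by positivity), abs_mul, abs_mul, abs_mul, abs_of_nonneg hα]
        nlinarith [abs_nonneg t]

namespace Complex

theorem sq_norm_sin (z : ℂ) : ‖sin z‖ ^ 2 = Real.sin z.re ^ 2 + Real.sinh z.im ^ 2 := by
  rw [sin_eq, ← ofReal_sin, ← ofReal_cos, ← ofReal_cosh, ← ofReal_sinh, Complex.sq_norm,
    normSq_apply]
  simp only [add_re, add_im, mul_re, mul_im, ofReal_re, ofReal_im, I_re, I_im]
  nlinarith [Real.sin_sq_add_cos_sq z.re, Real.cosh_sq z.im]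

theorem sq_norm_cos (z : ℂ) : ‖cos z‖ ^ 2 = Real.cos z.re ^ 2 + Real.sinh z.im ^ 2 := by
  rw [cos_eq, ← ofReal_sin, ← ofReal_cos, ← ofReal_cosh, ← ofReal_sinh, Complex.sq_norm,
    normSq_apply]
  simp only [sub_re, sub_im, mul_re, mul_im, ofReal_re, ofReal_im, I_re, I_im]
  nlinarith [Real.sin_sq_add_cos_sq z.re, Real.cosh_sq z.im]

theorem norm_sin_le_cosh_im (z : ℂ) : ‖sin z‖ ≤ Real.cosh z.im := by
  refine le_of_sq_le_sq ?_ (Real.cosh_pos _).le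
  rw [sq_norm_sin, Real.cosh_sq']
  nlinarith [Real.sin_sq_le_one z.re]

theorem norm_cos_le_cosh_im (z : ℂ) : ‖cos z‖ ≤ Real.cosh z.im := by
  refine le_of_sq_le_sq ?_ (Real.cosh_pos _).le
  rw [sq_norm_cos, Real.cosh_sq']
  nlinarith [Real.cos_sq_le_one z.re]

theorem sq_add_sinh_sq_le_sq_norm_sin {m : ℝ} (z : ℂ) (hmz : |m| ≤ |Real.sin z.re|) :
    m ^ 2 + Real.sinh z.im ^ 2 ≤ ‖sin z‖ ^ 2 := by
  rw [sq_norm_sin]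
  linarith [sq_le_sq.2 hmz]

theorem mul_cosh_im_le_norm_sin {m : ℝ} (z : ℂ) (hm : 0 ≤ m) (hmz : m ≤ |Real.sin z.re|) :
    m * Real.cosh z.im ≤ ‖sin z‖ := by
  have hm1 : m ^ 2 ≤ 1 := pow_le_one₀ hm (hmz.trans (Real.abs_sin_le_one _))
  have hS := sq_add_sinh_sq_le_sq_norm_sin z (m := m) (by rwa [abs_of_nonneg hm])
  refine le_of_sq_le_sq ?_ (norm_nonneg _)
  rw [mul_pow, Real.cosh_sq']
  nlinarith [mul_le_mul_of_nonneg_right hm1 (sq_nonneg (Real.sinh z.im))]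

theorem sin_ne_zero_of_sin_re_ne_zero {z : ℂ} (h : Real.sin z.re ≠ 0) : sin z ≠ 0 := by
  intro hz
  have := sq_norm_sin z
  rw [hz, norm_zero] at this
  nlinarith [sq_nonneg (Real.sinh z.im), sq_pos_of_ne_zero h]

theorem mul_le_cosh_im_of_le {u v z : ℂ} {a b α : ℝ} (hab : |a| + |b| ≤ α)
    (hu : ‖u‖ ≤ Real.cosh (z * a).im) (hv : ‖v‖ ≤ Real.cosh (z * b).im) :
    ‖u‖ * ‖v‖ ≤ Real.cosh (z * α).im := by
  simp only [mul_im, ofReal_re, ofReal_im, mul_zero, zero_add] at hu hv ⊢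
  exact (mul_le_mul hu hv (norm_nonneg v) (Real.cosh_pos _).le).trans
    (Real.cosh_mul_mul_cosh_mul_le hab _)

end Complex

section GreenProfile

open Complex

def greenProfile (a b α : ℝ) (z : ℂ) : ℂ :=
  sin (z * a) * sin (z * b) / (z * sin (z * α))

def greenProfileDeriv (a b α : ℝ) (z : ℂ) : ℂ :=
  (a * cos (z * a) * sin (z * b) + b * sin (z * a) * cos (z * b)) / (z * sin (z * α))
    - sin (z * a) * sin (z * b) / (z ^ 2 * sin (z * α))
    - α * sin (z * a) * sin (z * b) * cos (z * α) / (z * sin (z * α) ^ 2)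

theorem greenProfileDeriv_majorant_le {t α R S m : ℝ} (ht : 0 ≤ t) (hα : 0 ≤ α)
    (hαπ : α ≤ Real.pi) (htR : t ≤ R) (hR : 1 ≤ R) (hm : 0 < m) (hm1 : m ≤ 1)
    (hCS : m * Real.cosh (t * α) ≤ S) (hS : m ^ 2 + Real.sinh (t * α) ^ 2 ≤ S ^ 2) :
    t * (α * Real.cosh (t * α) / (R * S) + Real.cosh (t * α) / (R ^ 2 * S)
      + α * Real.cosh (t * α) ^ 2 / (R * S ^ 2)) ≤ 10 / m := by
  set u := t * α
  have hR0 : 0 < R := by linarith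
  have hS0 : 0 < S := lt_of_lt_of_le (by positivity) hCS
  have hCS' : Real.cosh u / S ≤ 1 / m := by
    rw [div_le_div_iff₀ hS0 hm]; linarith
  have htR' : t / R ≤ 1 := (div_le_one hR0).2 htR
  have hT1 : t * (α * Real.cosh u / (R * S)) ≤ Real.pi / m := by
    calc t * (α * Real.cosh u / (R * S)) = t / R * α * (Real.cosh u / S) := by field_simp
      _ ≤ 1 * Real.pi * (1 / m) := by gcongr
      _ = Real.pi / m := by ring
  have hT2 : t * (Real.cosh u / (R ^ 2 * S)) ≤ 1 / m := by
    calc t * (Real.cosh u / (R ^ 2 * S)) = t / R * R⁻¹ * (Real.cosh u / S) := by field_simp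
      _ ≤ 1 * 1 * (1 / m) := by gcongr; exact inv_le_one_of_one_le₀ hR
      _ = 1 / m := by ring
  have hu : u / S ^ 2 ≤ 1 / (2 * m) := by
    have hu0 : 0 ≤ u := by positivity
    have hsu : u ≤ Real.sinh u := Real.self_le_sinh_iff.2 hu0
    have hsu2 : u * u ≤ Real.sinh u * Real.sinh u := mul_le_mul hsu hsu hu0 (hu0.trans hsu)
    rw [div_le_div_iff₀ (by positivity) (by positivity)]
    nlinarith [sq_nonneg (m - u)]
  have hT3 : t * (α * Real.cosh u ^ 2 / (R * S ^ 2)) ≤ 1 / (2 * m) + Real.pi := by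
    have hsS : Real.sinh u ^ 2 / S ^ 2 ≤ 1 := (div_le_one (by positivity)).2 (by nlinarith)
    calc t * (α * Real.cosh u ^ 2 / (R * S ^ 2))
        = R⁻¹ * (u / S ^ 2) + t / R * α * (Real.sinh u ^ 2 / S ^ 2) := by
          rw [Real.cosh_sq']; field_simp; simp only [u]; ring
      _ ≤ 1 * (1 / (2 * m)) + 1 * Real.pi * 1 := by
          gcongr
          exact inv_le_one_of_one_le₀ hR
      _ = 1 / (2 * m) + Real.pi := by ring
  have hπm : Real.pi ≤ Real.pi / m := le_div_self Real.pi_pos.le hm hm1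
  calc _ = t * (α * Real.cosh u / (R * S)) + t * (Real.cosh u / (R ^ 2 * S))
        + t * (α * Real.cosh u ^ 2 / (R * S ^ 2)) := by ring
    _ ≤ Real.pi / m + 1 / m + (1 / (2 * m) + Real.pi / m) := by gcongr; linarith
    _ = (2 * Real.pi + 3 / 2) / m := by field_simp; ring
    _ ≤ 10 / m := by gcongr; linarith [Real.pi_le_four]

theorem hasDerivAt_greenProfile (a b α : ℝ) {z : ℂ} (hz : z ≠ 0) (hs : sin (z * α) ≠ 0) :
    HasDerivAt (greenProfile a b α) (greenProfileDeriv a b α z) z := by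
  have hsin (c : ℝ) : HasDerivAt (fun w : ℂ => sin (w * c)) (cos (z * c) * c) z :=
    (hasDerivAt_mul_const (c : ℂ)).csin.congr_deriv (by simp)
  refine (((hsin a).mul (hsin b)).div ((hasDerivAt_id' z).mul (hsin α))
    (mul_ne_zero hz hs)).congr_deriv ?_
  simp only [greenProfileDeriv, Pi.mul_apply]
  field_simp
  ring

theorem norm_mul_norm_greenProfile_le {a b α m : ℝ} (hab : |a| + |b| ≤ α) (z : ℂ)
    (hm : 0 < m) (hmz : m ≤ |Real.sin (z.re * α)|) :
    ‖z‖ * ‖greenProfile a b α z‖ ≤ 1 / m := by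
  rcases eq_or_ne z 0 with rfl | hz
  · simpa using hm.le
  have hS : m * Real.cosh (z * α).im ≤ ‖sin (z * α)‖ :=
    mul_cosh_im_le_norm_sin _ hm.le (by simpa using hmz)
  have hS0 : 0 < ‖sin (z * α)‖ := lt_of_lt_of_le (by positivity) hS
  have hN := mul_le_cosh_im_of_le hab (norm_sin_le_cosh_im (z * a)) (norm_sin_le_cosh_im (z * b))
  rw [greenProfile, norm_div, norm_mul, norm_mul, ← mul_div_assoc,
    mul_div_mul_left _ _ (norm_ne_zero_iff.2 hz), div_le_div_iff₀ hS0 hm]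
  nlinarith

theorem norm_greenProfileDeriv_le {a b α : ℝ} (hab : |a| + |b| ≤ α) (z : ℂ) :
    ‖greenProfileDeriv a b α z‖ ≤
      α * Real.cosh (z * α).im / (‖z‖ * ‖sin (z * α)‖)
        + Real.cosh (z * α).im / (‖z‖ ^ 2 * ‖sin (z * α)‖)
        + α * Real.cosh (z * α).im ^ 2 / (‖z‖ * ‖sin (z * α)‖ ^ 2) := by
  have hα : 0 ≤ α := (add_nonneg (abs_nonneg a) (abs_nonneg b)).trans hab
  have hss := mul_le_cosh_im_of_le hab (norm_sin_le_cosh_im (z * a)) (norm_sin_le_cosh_im (z * b))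
  have hcs := mul_le_cosh_im_of_le hab (norm_cos_le_cosh_im (z * a)) (norm_sin_le_cosh_im (z * b))
  have hsc := mul_le_cosh_im_of_le hab (norm_sin_le_cosh_im (z * a)) (norm_cos_le_cosh_im (z * b))
  have hnum : ‖a * cos (z * a) * sin (z * b) + b * sin (z * a) * cos (z * b)‖ ≤
      α * Real.cosh (z * α).im := by
    calc _ ≤ |a| * (‖cos (z * a)‖ * ‖sin (z * b)‖) + |b| * (‖sin (z * a)‖ * ‖cos (z * b)‖) := by
          refine (norm_add_le _ _).trans_eq ?_
          simp only [norm_mul, norm_real, Real.norm_eq_abs]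
          ring
      _ ≤ (|a| + |b|) * Real.cosh (z * α).im := by rw [add_mul]; gcongr
      _ ≤ α * Real.cosh (z * α).im := by gcongr
  refine (norm_sub_le _ _).trans (add_le_add ((norm_sub_le _ _).trans (add_le_add ?_ ?_)) ?_)
  · rw [norm_div, norm_mul]; gcongr
  · rw [norm_div, norm_mul, norm_mul, norm_pow]; gcongr
  · have h3 : ‖(α : ℂ) * sin (z * a) * sin (z * b) * cos (z * α)‖ ≤
        α * Real.cosh (z * α).im ^ 2 := by
      rw [norm_mul, norm_mul, norm_mul, norm_real, Real.norm_eq_abs, abs_of_nonneg hα, sq,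
        mul_assoc α, mul_assoc α]
      gcongr
      exact norm_cos_le_cosh_im _
    rw [norm_div, norm_mul z, norm_pow]
    gcongr

theorem abs_im_mul_norm_greenProfileDeriv_le {a b α m : ℝ} (hab : |a| + |b| ≤ α)
    (hαπ : α ≤ Real.pi) {z : ℂ} (hz : 1 ≤ z.re) (hm : 0 < m)
    (hmz : m ≤ |Real.sin (z.re * α)|) :
    |z.im| * ‖greenProfileDeriv a b α z‖ ≤ 10 / m := by
  have hα : 0 ≤ α := (add_nonneg (abs_nonneg a) (abs_nonneg b)).trans hab
  have hre : (z * α).re = z.re * α := by simp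
  have him : (z * α).im = z.im * α := by simp
  have hcosh : Real.cosh (z * α).im = Real.cosh (|z.im| * α) := by
    rw [him, ← Real.cosh_abs, abs_mul, abs_of_nonneg hα]
  have hsinh : Real.sinh (z * α).im ^ 2 = Real.sinh (|z.im| * α) ^ 2 := by
    rw [him, ← sq_abs, Real.abs_sinh, abs_mul, abs_of_nonneg hα]
  have hCS := mul_cosh_im_le_norm_sin (z * α) hm.le (hre ▸ hmz)
  have hS := sq_add_sinh_sq_le_sq_norm_sin (z * α) (m := m) (by rwa [hre, abs_of_pos hm])
  rw [hcosh] at hCS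
  rw [hsinh] at hS
  refine (mul_le_mul_of_nonneg_left (norm_greenProfileDeriv_le hab z) (abs_nonneg _)).trans ?_
  rw [hcosh]
  exact greenProfileDeriv_majorant_le (abs_nonneg _) hα hαπ (abs_im_le_norm z)
    (hz.trans ((le_abs_self _).trans (abs_re_le_norm z))) hm
    (hmz.trans (Real.abs_sin_le_one _)) hCS hS

end GreenProfile

open Real in
theorem Real.two_div_pi_mul_le_abs_sin {x ε : ℝ} (k : ℤ) (h : x - k * π ∈ Set.Icc ε (π - ε)) :
    2 / π * ε ≤ |sin x| := by
  obtain ⟨h₁, h₂⟩ := h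
  rcases le_or_gt ε 0 with hε | hε
  · exact (mul_nonpos_of_nonneg_of_nonpos (by positivity) hε).trans (abs_nonneg _)
  have hsin : |sin x| = |sin (x - k * π)| := by
    rw [sin_sub_int_mul_pi, abs_mul, abs_neg_one_zpow, one_mul]
  rw [hsin, abs_of_nonneg (sin_nonneg_of_nonneg_of_le_pi (by linarith) (by linarith))]
  rcases le_total (x - k * π) (π / 2) with h | h
  · calc 2 / π * ε ≤ 2 / π * (x - k * π) := by gcongr
      _ ≤ sin (x - k * π) := mul_le_sin (by linarith) h
  · rw [← sin_pi_sub]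
    calc 2 / π * ε ≤ 2 / π * (π - (x - k * π)) := by gcongr; linarith
      _ ≤ sin (π - (x - k * π)) := mul_le_sin (by linarith) (by linarith)

open Real in
theorem exists_int_sub_mul_pi_mem_of_admissible {α p : ℝ} (hα : 0 < α) (hαπ : α < π)
    (hp : 2 ≤ p) (hadm : Admissible α p) :
    ∃ k : ℤ, (2 - 2 / p) * α - k * π ∈
      Set.Icc (min α (min |α - π / 2| (π - α))) (π - min α (min |α - π / 2| (π - α))) := by
  set ε := min α (min |α - π / 2| (π - α))
  have hε₁ : ε ≤ α := min_le_left _ _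
  have hε₂ : ε ≤ |α - π / 2| := (min_le_right _ _).trans (min_le_left _ _)
  have hε₃ : ε ≤ π - α := (min_le_right _ _).trans (min_le_right _ _)
  have hp0 : 0 < p := by linarith
  have hw : (2 - 2 / p) * α = 2 * α - 2 * α / p := by ring
  have hw₀ : 0 < 2 * α / p := by positivity
  have hw₁ : 2 * α / p ≤ α := by rw [div_le_iff₀ hp0]; nlinarith
  rcases hadm with ⟨hα2, -⟩ | ⟨hα2, hpα⟩
  · rw [abs_of_neg (by linarith)] at hε₂
    exact ⟨0, by push_cast; linarith, by push_cast; linarith⟩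
  · rw [abs_of_pos (by linarith)] at hε₂
    have hw₂ : 2 * α / p ≤ α - π / 2 := by
      rw [div_le_iff₀ hp0]
      rw [← mul_div_assoc, div_le_iff₀ (by linarith)] at hpα
      nlinarith
    exact ⟨1, by push_cast; linarith, by push_cast; linarith⟩

theorem Xi_re (q ξ : ℝ) : (Xi q ξ).re = 2 / q := by simp [Xi]

theorem Xi_im (q ξ : ℝ) : (Xi q ξ).im = ξ := by simp [Xi]

theorem hasDerivAt_Xi (q ξ : ℝ) : HasDerivAt (Xi q) Complex.I ξ := by
  have h : HasDerivAt (fun s : ℝ => (s : ℂ) * Complex.I) Complex.I ξ := by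
    simpa using (hasDerivAt_id ξ).ofReal_comp.mul_const Complex.I
  exact h.const_add _

theorem two_div_div_sub_one {p : ℝ} (hp : p ≠ 0) : 2 / (p / (p - 1)) = 2 - 2 / p := by
  rw [div_div_eq_mul_div]; field_simp

theorem Kker_eq_greenProfile {q α θ y : ℝ} (hθ₀ : 0 ≤ θ) (hθ : θ ≤ α) (hy₀ : 0 ≤ y)
    (hy : y ≤ α) :
    ∃ a b : ℝ, |a| + |b| ≤ α ∧ ∀ s, Kker q α s θ y = greenProfile a b α (Xi q s) := by
  by_cases hθy : θ ≤ y
  · refine ⟨θ, y - α, ?_, fun s => by simp [Kker, greenProfile, hθy]⟩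
    rw [abs_of_nonneg hθ₀, abs_of_nonpos (by linarith)]; linarith
  · refine ⟨θ - α, y, ?_, fun s => by simp [Kker, greenProfile, hθy]⟩
    rw [abs_of_nonpos (by linarith), abs_of_nonneg hy₀]; linarith

theorem two_div_pi_mul_le_abs_sin_Xi_re {α p : ℝ} (hα : 0 < α) (hαπ : α < Real.pi) (hp : 2 ≤ p)
    (hadm : Admissible α p) (ξ : ℝ) :
    2 / Real.pi * min α (min |α - Real.pi / 2| (Real.pi - α)) ≤
      |Real.sin ((Xi (p / (p - 1)) ξ).re * α)| := by
  obtain ⟨k, hk⟩ := exists_int_sub_mul_pi_mem_of_admissible hα hαπ hp hadm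
  rw [Xi_re, two_div_div_sub_one (by linarith)]
  exact Real.two_div_pi_mul_le_abs_sin k hk

/-- Uniform bounds `|Ξ||K| ≤ C ε_α⁻¹` and `|ξ||∂_ξ K| ≤ C ε_α⁻¹` for the Green kernel,
with `q = p/(p-1)`, `ε_α = min(α, |α−π/2|, π−α)`, `p` admissible for `α`. -/
theorem stmt17 :
    ∃ C : ℝ, 0 < C ∧
      ∀ α : ℝ, 0 < α → α < Real.pi → α ≠ Real.pi / 2 →
      ∀ p : ℝ, 2 ≤ p → Admissible α p →
      ∀ ξ θ y : ℝ, 0 < θ → θ < α → 0 < y → y < α →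
        ‖Xi (p / (p - 1)) ξ‖ *
            ‖Kker (p / (p - 1)) α ξ θ y‖ ≤
          C / min α (min |α - Real.pi / 2| (Real.pi - α)) ∧
        |ξ| * ‖deriv (fun s : ℝ => Kker (p / (p - 1)) α s θ y) ξ‖ ≤
          C / min α (min |α - Real.pi / 2| (Real.pi - α)) := by
  refine ⟨5 * Real.pi, by positivity, ?_⟩
  intro α hα hαπ hα2 p hp hadm ξ θ y hθ₀ hθ hy₀ hy
  set ε := min α (min |α - Real.pi / 2| (Real.pi - α))
  set z := Xi (p / (p - 1)) ξ
  have hε : 0 < ε := lt_min hα (lt_min (abs_pos.2 (sub_ne_zero.2 hα2)) (by linarith))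
  have hm : 0 < 2 / Real.pi * ε := by positivity
  have hsin := two_div_pi_mul_le_abs_sin_Xi_re hα hαπ hp hadm ξ
  have hre : 1 ≤ z.re := by
    rw [Xi_re, two_div_div_sub_one (by linarith)]
    linarith [(div_le_one (by linarith : (0 : ℝ) < p)).2 hp]
  have hz : z ≠ 0 := fun h => by norm_num [h] at hre
  have hs : Complex.sin (z * α) ≠ 0 :=
    Complex.sin_ne_zero_of_sin_re_ne_zero (by simpa using abs_pos.1 (hm.trans_le hsin))
  obtain ⟨a, b, hab, hK⟩ := Kker_eq_greenProfile (q := p / (p - 1)) hθ₀.le hθ.le hy₀.le hy.le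
  have hderiv : HasDerivAt (fun s => Kker (p / (p - 1)) α s θ y)
      (greenProfileDeriv a b α z * Complex.I) ξ := by
    simp only [hK]
    exact (hasDerivAt_greenProfile a b α hz hs).comp ξ (hasDerivAt_Xi _ ξ)
  have h10 : 10 / (2 / Real.pi * ε) = 5 * Real.pi / ε := by field_simp; ring
  refine ⟨?_, ?_⟩
  · rw [hK, ← h10]
    refine (norm_mul_norm_greenProfile_le hab z hm hsin).trans ?_
    gcongr; norm_num
  · rw [hderiv.deriv, norm_mul, Complex.norm_I, mul_one, ← Xi_im (p / (p - 1)) ξ, ← h10]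
    exact abs_im_mul_norm_greenProfileDeriv_le hab hαπ.le hre hm hsin
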